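/- Suppose y : [t₀,T] → ℝ≥0 is absolutely continuous, D : [t₀,T] → ℝ≥0 integrable, and y'(t) + D(t) ≤ C₁ y(t)² · D̃(t) + h(t) where D̃(t) ≤ D(t) and ∫ h ≤ K. If additionally y(t₀) = 0 and the a priori bound sup y(t) ≤ 4CK holds with 4CK ≤ 1 and appropriate smallness of K, then in fact sup_{[t₀,T]} y(t) + ∫_{t₀}^{T} D(t) dt ≤ 2CK (continuity/bootstrap improvement). -/

import Mathlib

open MeasureTheory Set intervalIntegral

/-! The differential inequality integrates to `y(t) + ∫ D ≤ ∫ C₁ y² D̃ + ∫ h`. Under the a priori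
bound `y ≤ 4CK`, the smallness condition `C₁ (4CK)² ≤ 1/2` makes the nonlinear term at most `D / 2`,
so it is absorbed by the dissipation: `y(t) + ½ ∫ D ≤ ∫ h ≤ K`, whence
`y(t) + ∫ D ≤ 2K ≤ 2CK` because `y ≥ 0`. -/

theorem sub_add_mul_integral_le_integral_of_deriv_add_mul_le {y y' D h : ℝ → ℝ} {a b c : ℝ}
    (hab : a ≤ b) (hy : ∀ t ∈ Icc a b, HasDerivAt y (y' t) t)
    (hD : IntervalIntegrable D volume a b) (hh : IntervalIntegrable h volume a b)
    (hle : ∀ t ∈ Icc a b, y' t + c * D t ≤ h t) :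
    y b - y a + c * ∫ t in a..b, D t ≤ ∫ t in a..b, h t := by
  have hφ : IntervalIntegrable (fun t => h t - c * D t) volume a b := hh.sub (hD.const_mul c)
  have hftc := sub_le_integral_of_hasDeriv_right_of_le hab
    (fun t ht => (hy t ht).continuousAt.continuousWithinAt)
    (fun t ht => (hy t (Ioo_subset_Icc_self ht)).hasDerivWithinAt)
    ((intervalIntegrable_iff_integrableOn_Icc_of_le hab).1 hφ)
    (fun t ht => by linarith [hle t (Ioo_subset_Icc_self ht)])
  rw [integral_sub hh (hD.const_mul c), intervalIntegral.integral_const_mul] at hftc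
  linarith

theorem mul_sq_mul_le_half_of_le {c x M d e : ℝ} (hc : 0 ≤ c) (hx : 0 ≤ x) (hxM : x ≤ M)
    (hcM : c * M ^ 2 ≤ 1 / 2) (hd : 0 ≤ d) (hde : d ≤ e) : c * x ^ 2 * d ≤ e / 2 :=
  calc c * x ^ 2 * d ≤ c * M ^ 2 * d := by gcongr
    _ ≤ 1 / 2 * d := by gcongr
    _ ≤ e / 2 := by linarith

theorem stmt13_general (t₀ T C C₁ K : ℝ) (hC : 1 ≤ C) (hC₁ : 0 ≤ C₁)
    (hK : 0 ≤ K)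
    (y y' D Dt h : ℝ → ℝ)
    (hy : ∀ t ∈ Icc t₀ T, HasDerivAt y (y' t) t)
    (hypos : ∀ t ∈ Icc t₀ T, 0 ≤ y t)
    (hDtpos : ∀ t ∈ Icc t₀ T, 0 ≤ Dt t)
    (hhpos : ∀ t ∈ Icc t₀ T, 0 ≤ h t)
    (hDint : IntervalIntegrable D volume t₀ T)
    (hhint : IntervalIntegrable h volume t₀ T)
    (hDtD : ∀ t ∈ Icc t₀ T, Dt t ≤ D t)
    (hdiff : ∀ t ∈ Icc t₀ T, y' t + D t ≤ C₁ * (y t) ^ 2 * Dt t + h t)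
    (hhK : ∫ t in t₀..T, h t ≤ K)
    (hy0 : y t₀ = 0)
    (hapriori : ∀ t ∈ Icc t₀ T, y t ≤ 4 * C * K)
    (hsmall₂ : C₁ * (4 * C * K) ^ 2 ≤ 1/2) :
    ∀ t ∈ Icc t₀ T, y t + ∫ s in t₀..t, D s ≤ 2 * C * K := by
  rintro t ⟨ht₀, htT⟩
  have hIcc : Icc t₀ t ⊆ Icc t₀ T := Icc_subset_Icc_right htT
  have huIcc : uIcc t₀ t ⊆ uIcc t₀ T := uIcc_subset_uIcc_left (mem_uIcc_of_le ht₀ htT)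
  have hdissip : ∀ s ∈ Icc t₀ T, y' s + 1 / 2 * D s ≤ h s := fun s hs => by
    have habsorb := mul_sq_mul_le_half_of_le hC₁ (hypos s hs) (hapriori s hs) hsmall₂
      (hDtpos s hs) (hDtD s hs)
    linarith [hdiff s hs]
  have henergy : y t - y t₀ + 1 / 2 * ∫ s in t₀..t, D s ≤ ∫ s in t₀..t, h s :=
    sub_add_mul_integral_le_integral_of_deriv_add_mul_le ht₀ (fun s hs => hy s (hIcc hs))
      (hDint.mono_set huIcc) (hhint.mono_set huIcc) (fun s hs => hdissip s (hIcc hs))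
  have hforcing : ∫ s in t₀..t, h s ≤ K :=
    (integral_mono_interval le_rfl ht₀ htT
      ((ae_restrict_mem measurableSet_Ioc).mono fun s hs => hhpos s (Ioc_subset_Icc_self hs))
      hhint).trans hhK
  have hyt : 0 ≤ y t := hypos t ⟨ht₀, htT⟩
  linarith [le_mul_of_one_le_left hK hC]

/-- Abstract bootstrap (continuation) argument: if `y(t₀) = 0`,
`y' + D ≤ C₁ y² D̃ + h` with `D̃ ≤ D`, `∫ h ≤ K`, the a priori bound
`sup y ≤ 4CK ≤ 1` holds, `1 ≤ C`, and `K` is appropriately small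
(`C₁(4CK)² ≤ 1/2`), then in fact `sup y + ∫ D ≤ 2CK`. -/
theorem stmt13 (t₀ T C C₁ K : ℝ) (ht : t₀ ≤ T) (hC : 1 ≤ C) (hC₁ : 0 ≤ C₁)
    (hK : 0 ≤ K)
    (y y' D Dt h : ℝ → ℝ)
    (hy : ∀ t ∈ Icc t₀ T, HasDerivAt y (y' t) t)
    (hypos : ∀ t ∈ Icc t₀ T, 0 ≤ y t)
    (hDpos : ∀ t ∈ Icc t₀ T, 0 ≤ D t) (hDtpos : ∀ t ∈ Icc t₀ T, 0 ≤ Dt t)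
    (hhpos : ∀ t ∈ Icc t₀ T, 0 ≤ h t)
    (hDint : IntervalIntegrable D volume t₀ T)
    (hDtint : IntervalIntegrable Dt volume t₀ T)
    (hhint : IntervalIntegrable h volume t₀ T)
    (hDtD : ∀ t ∈ Icc t₀ T, Dt t ≤ D t)
    (hdiff : ∀ t ∈ Icc t₀ T, y' t + D t ≤ C₁ * (y t) ^ 2 * Dt t + h t)
    (hhK : ∫ t in t₀..T, h t ≤ K)
    (hy0 : y t₀ = 0)
    (hapriori : ∀ t ∈ Icc t₀ T, y t ≤ 4 * C * K)
    (hsmall₁ : 4 * C * K ≤ 1)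
    (hsmall₂ : C₁ * (4 * C * K) ^ 2 ≤ 1/2) :
    ∀ t ∈ Icc t₀ T, y t + ∫ s in t₀..t, D s ≤ 2 * C * K :=
  stmt13_general t₀ T C C₁ K hC hC₁ hK y y' D Dt h hy hypos hDtpos hhpos hDint hhint hDtD hdiff hhK
    hy0 hapriori hsmall₂
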